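/- Let {P_m}_{m=0}^{M-1} be mutually orthogonal projections on a finite-dimensional Hilbert space summing to the identity, and let ρ be a density operator. Define C(ρ) = 1 - Σ_m Tr[(P_m √ρ P_m)^2]. Then C(ρ) ≥ 0, and C(ρ) = 0 if and only if ρ = Σ_m P_m ρ P_m. -/

import Mathlib

open scoped ComplexOrder

open Classical in
/-- The positive semidefinite square root of a matrix (zero if not psd). -/
noncomputable def msqrt {d : ℕ} (ρ : Matrix (Fin d) (Fin d) ℂ) : Matrix (Fin d) (Fin d) ℂ :=
  if h : ρ.PosSemidef then
    h.1.eigenvectorUnitary.1 * Matrix.diagonal ((↑) ∘ (√·) ∘ h.1.eigenvalues) *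
      (star h.1.eigenvectorUnitary : Matrix (Fin d) (Fin d) ℂ)
  else 0

/-!
Write `A = √ρ` and `Δ X = ∑ₘ Pₘ X Pₘ` for the pinching. Since `Δ` is idempotent and
self-adjoint for the trace pairing, Pythagoras gives `C(ρ) = Tr A² - Tr (Δ A)² = Tr (A - Δ A)²`,
the squared Hilbert–Schmidt norm of the Hermitian matrix `A - Δ A`. So `C(ρ) ≥ 0`, with equality
iff `A = Δ A`, i.e. iff `A` commutes with every `Pₘ`. As `A` is a continuous function of
`ρ = A²`, this holds iff `ρ` commutes with every `Pₘ`, i.e. iff `ρ = Δ ρ`.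
-/

open Matrix

def pinching {R ι : Type*} [NonUnitalNonAssocSemiring R] [Fintype ι] (e : ι → R) (x : R) : R :=
  ∑ i, e i * x * e i

lemma isSelfAdjoint_pinching {R ι : Type*} [NonUnitalSemiring R] [StarRing R] [Fintype ι]
    {e : ι → R} (he : ∀ i, IsSelfAdjoint (e i)) {x : R} (hx : IsSelfAdjoint x) :
    IsSelfAdjoint (pinching e x) :=
  isSelfAdjoint_sum _ fun i _ => hx.conjugate_self (he i)

lemma IsIdempotentElem.corner_mul_corner {S : Type*} [Semigroup S] {p : S}
    (hp : IsIdempotentElem p) (x y : S) : p * x * p * (p * y * p) = p * x * p * y * p := by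
  rw [← mul_assoc, ← mul_assoc, mul_assoc (p * x) p p, hp.eq]

namespace CompleteOrthogonalIdempotents

section Ring

variable {R ι : Type*} [Ring R] [Fintype ι] {e : ι → R} (he : CompleteOrthogonalIdempotents e)
include he

lemma mul_pinching (j : ι) (x : R) : e j * pinching e x = e j * x * e j := by
  classical
  simp only [pinching, Finset.mul_sum, ← mul_assoc, he.mul_eq, ite_mul, zero_mul,
    Finset.sum_ite_eq, Finset.mem_univ, if_true]

lemma pinching_mul (j : ι) (x : R) : pinching e x * e j = e j * x * e j := by
  classical
  simp only [pinching, Finset.sum_mul, mul_assoc, he.mul_eq, mul_ite, mul_zero,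
    Finset.sum_ite_eq', Finset.mem_univ, if_true]

lemma pinching_eq_self_iff {x : R} : pinching e x = x ↔ ∀ i, Commute (e i) x := by
  refine ⟨fun h i => ?_, fun h => ?_⟩
  · calc e i * x = e i * pinching e x := by rw [h]
      _ = pinching e x * e i := by rw [he.mul_pinching, he.pinching_mul]
      _ = x * e i := by rw [h]
  · calc pinching e x = ∑ i, x * e i := by
          refine Finset.sum_congr rfl fun i _ => ?_
          rw [(h i).eq, mul_assoc, (he.idem i).eq]
      _ = x := by rw [← Finset.mul_sum, he.complete, mul_one]

lemma pinching_mul_pinching (x y : R) :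
    pinching e x * pinching e y = ∑ i, (e i * x * e i) * (e i * y * e i) := by
  rw [pinching.eq_1 e y, Finset.mul_sum]
  refine Finset.sum_congr rfl fun i _ => ?_
  rw [(he.idem i).corner_mul_corner, ← mul_assoc, ← mul_assoc, he.pinching_mul]

end Ring

section Matrix

variable {n ι R : Type*} [Fintype n] [DecidableEq n] [CommRing R] [Fintype ι]
  {e : ι → Matrix n n R} (he : CompleteOrthogonalIdempotents e)
include he

lemma trace_mul_pinching (x y : Matrix n n R) :
    (x * pinching e y).trace = (pinching e x * pinching e y).trace := by
  rw [he.pinching_mul_pinching, pinching, Finset.mul_sum, trace_sum, trace_sum]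
  refine Finset.sum_congr rfl fun i _ => ?_
  calc (x * (e i * y * e i)).trace = (e i * x * e i * y).trace := by
        rw [← mul_assoc, trace_mul_comm]
        simp only [mul_assoc]
    _ = (e i * x * e i * (e i * y * e i)).trace := by
        rw [(he.idem i).corner_mul_corner, trace_mul_comm (e i * x * e i * y)]
        simp only [← mul_assoc, (he.idem i).eq]

lemma trace_sub_pinching_mul_sub_pinching (x y : Matrix n n R) :
    ((x - pinching e x) * (y - pinching e y)).trace
      = (x * y).trace - (pinching e x * pinching e y).trace := by
  have hyx : (pinching e x * y).trace = (pinching e x * pinching e y).trace := by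
    rw [trace_mul_comm, he.trace_mul_pinching, trace_mul_comm]
  rw [sub_mul, mul_sub, mul_sub, trace_sub, trace_sub, trace_sub, he.trace_mul_pinching, hyx]
  ring

end Matrix

end CompleteOrthogonalIdempotents

namespace CFC

lemma commute_sqrt_iff {A : Type*} [PartialOrder A] [Ring A] [StarRing A] [TopologicalSpace A]
    [StarOrderedRing A] [Algebra ℝ A] [ContinuousFunctionalCalculus ℝ A IsSelfAdjoint]
    [NonnegSpectrumClass ℝ A] [IsTopologicalRing A] [T2Space A] {a b : A} (ha : 0 ≤ a) :
    Commute b (sqrt a) ↔ Commute b a := by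
  refine ⟨fun h => sqrt_mul_sqrt_self a ha ▸ h.mul_right h, fun h => ?_⟩
  rw [sqrt_eq_cfc]
  exact (h.symm.cfc_nnreal NNReal.sqrt).symm

end CFC

namespace Matrix

variable {m n 𝕜 : Type*} [Fintype m] [Fintype n] [RCLike 𝕜]

lemma re_trace_conjTranspose_mul_self_nonneg (X : Matrix m n 𝕜) :
    0 ≤ RCLike.re (Xᴴ * X).trace :=
  (RCLike.nonneg_iff.mp X.posSemidef_conjTranspose_mul_self.trace_nonneg).1

lemma re_trace_conjTranspose_mul_self_eq_zero_iff {X : Matrix m n 𝕜} :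
    RCLike.re (Xᴴ * X).trace = 0 ↔ X = 0 := by
  rw [← trace_conjTranspose_mul_self_eq_zero_iff]
  have him := (RCLike.nonneg_iff.mp X.posSemidef_conjTranspose_mul_self.trace_nonneg).2
  exact ⟨fun h => RCLike.ext (by simpa using h) (by simpa using him), fun h => by simp [h]⟩

end Matrix

section MatrixSqrt

open scoped MatrixOrder

variable {d : ℕ} {ρ : Matrix (Fin d) (Fin d) ℂ}

lemma msqrt_eq_cfcSqrt (hρ : ρ.PosSemidef) : msqrt ρ = CFC.sqrt ρ := by
  rw [msqrt, dif_pos hρ, CFC.sqrt_eq_cfc, cfc_nnreal_eq_real _ ρ hρ.nonneg, hρ.1.cfc_eq]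
  simp only [IsHermitian.cfc, Unitary.conjStarAlgAut_apply]
  congr 3
  funext i
  simp [Real.coe_sqrt, Real.coe_toNNReal', max_eq_left (hρ.eigenvalues_nonneg i)]

lemma isSelfAdjoint_msqrt (hρ : ρ.PosSemidef) : IsSelfAdjoint (msqrt ρ) := by
  rw [msqrt_eq_cfcSqrt hρ]
  exact (CFC.sqrt_nonneg ρ).isSelfAdjoint

lemma msqrt_mul_self (hρ : ρ.PosSemidef) : msqrt ρ * msqrt ρ = ρ := by
  rw [msqrt_eq_cfcSqrt hρ]
  exact CFC.sqrt_mul_sqrt_self ρ hρ.nonneg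

lemma commute_msqrt_iff (hρ : ρ.PosSemidef) {B : Matrix (Fin d) (Fin d) ℂ} :
    Commute B (msqrt ρ) ↔ Commute B ρ := by
  rw [msqrt_eq_cfcSqrt hρ]
  exact CFC.commute_sqrt_iff hρ.nonneg

end MatrixSqrt

/-- Faithfulness of the generalized 1/2-affinity of coherence:
`C(ρ) = 1 - Σ_m Tr[(P_m √ρ P_m)²] ≥ 0`, with equality iff `ρ = Σ_m P_m ρ P_m`. -/
theorem affinity_coherence_faithful {d M : ℕ}
    (P : Fin M → Matrix (Fin d) (Fin d) ℂ)
    (hPh : ∀ m, (P m).IsHermitian) (hPi : ∀ m, P m * P m = P m)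
    (hPo : ∀ m m', m ≠ m' → P m * P m' = 0) (hPs : ∑ m, P m = 1)
    (ρ : Matrix (Fin d) (Fin d) ℂ) (hρ : ρ.PosSemidef) (hρtr : ρ.trace = 1) :
    0 ≤ 1 - ∑ m, ((P m * msqrt ρ * P m) ^ 2).trace.re ∧
    (1 - ∑ m, ((P m * msqrt ρ * P m) ^ 2).trace.re = 0 ↔ ρ = ∑ m, P m * ρ * P m) := by
  have hP : CompleteOrthogonalIdempotents P := ⟨⟨hPi, hPo⟩, hPs⟩
  set A := msqrt ρ
  have hA : IsSelfAdjoint A := isSelfAdjoint_msqrt hρ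
  have hDA : IsSelfAdjoint (A - pinching P A) :=
    hA.sub (isSelfAdjoint_pinching (fun m => (hPh m).isSelfAdjoint) hA)
  have hC : 1 - ∑ m, ((P m * A * P m) ^ 2).trace.re
      = RCLike.re ((A - pinching P A)ᴴ * (A - pinching P A)).trace := by
    rw [← star_eq_conjTranspose, hDA.star_eq, hP.trace_sub_pinching_mul_sub_pinching,
      msqrt_mul_self hρ, hρtr, hP.pinching_mul_pinching, trace_sum]
    simp only [sq, RCLike.re_to_complex, Complex.sub_re, Complex.one_re, Complex.re_sum]
  rw [hC, re_trace_conjTranspose_mul_self_eq_zero_iff, sub_eq_zero, eq_comm]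
  exact ⟨re_trace_conjTranspose_mul_self_nonneg _, hP.pinching_eq_self_iff.trans <|
    (forall_congr' fun _ => commute_msqrt_iff hρ).trans <|
      hP.pinching_eq_self_iff.symm.trans eq_comm⟩
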